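/- arXiv:1202.0524 — 3 statements merged into one kernel-verified Lean document; each statement's English description precedes it below -/
import Mathlib

section
/- Let v₁, v₂ ∈ ℤ² be primitive vectors with |det(v₁, v₂)| ≥ 2. Then the parallelogram Π = [0, v₁] + [0, v₂] strictly contains a lattice segment of lattice length 2; that is, there exist a lattice point A and a primitive vector w with A + 2[0, w] ⊆ Π and A + 2[0,w] ≠ Π. -/
/-!
Since `v₁` is primitive it extends to a basis `(v₁, u)` of `ℤ²` with `det (v₁, u) = ±1`, and in
this basis `v₂ = a v₁ + D u` with `D = |det (v₁, v₂)| ≥ 2`. The lattice point `N v₁ + 2u`, where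
`N = ⌊2a / D⌋ + 1`, equals `s v₁ + (2 / D) v₂` with `0 ≤ s ≤ 1`, so it lies in `Π`; so does the
vertex `(N mod 2) v₁`. Their difference is `2 w` with `w = ⌊N / 2⌋ v₁ + u`, which is primitive
because `det (v₁, w) = ±1`, and by convexity the segment between them lies in `Π`. It is a proper
subset since the vertices `0, v₁, v₂` of `Π` are not collinear.
-/

open Pointwise

/-- The real point corresponding to a lattice point. -/
def coeV {n : ℕ} (v : Fin n → ℤ) : Fin n → ℝ := fun i => (v i : ℝ)

/-- A vector in `ℤ^n` is primitive if the gcd of its coordinates is `1`. -/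
def IsPrim {n : ℕ} (v : Fin n → ℤ) : Prop := Finset.univ.gcd v = 1

def det2 {R : Type*} [CommRing R] (v w : Fin 2 → R) : R := v 0 * w 1 - v 1 * w 0

def parallelogram (v₁ v₂ : Fin 2 → ℤ) : Set (Fin 2 → ℝ) :=
  segment ℝ 0 (coeV v₁) + segment ℝ 0 (coeV v₂)

section Det2

variable {R : Type*} [CommRing R]

lemma det2_smul_right (c : R) (v w : Fin 2 → R) : det2 v (c • w) = c * det2 v w := by
  simp only [det2, Pi.smul_apply, smul_eq_mul]; ring

lemma eq_det2_smul_add_det2_smul {v u : Fin 2 → R} (h : det2 v u = 1) (x : Fin 2 → R) :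
    x = det2 x u • v + det2 v x • u := by
  rw [det2] at h
  funext i
  fin_cases i <;> simp [det2] <;> linear_combination (-x _) * h

end Det2

section LatticeVectors

variable {n : ℕ}

@[simp]
lemma coeV_add (v w : Fin n → ℤ) : coeV (v + w) = coeV v + coeV w := by
  funext i; simp [coeV]

@[simp]
lemma coeV_zsmul (k : ℤ) (v : Fin n → ℤ) : coeV (k • v) = (k : ℝ) • coeV v := by
  funext i; simp [coeV]

lemma det2_coeV (v w : Fin 2 → ℤ) : det2 (coeV v) (coeV w) = ((det2 v w : ℤ) : ℝ) := by
  simp [det2, coeV]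

lemma isPrim_iff_isCoprime (v : Fin 2 → ℤ) : IsPrim v ↔ IsCoprime (v 0) (v 1) := by
  simp [IsPrim, Fin.univ_succ, Finset.gcd_insert, Int.isCoprime_iff_gcd_eq_one, ← Int.coe_gcd,
    ← Int.abs_eq_normalize, Int.gcd, Int.natAbs_abs]

lemma IsPrim.exists_det2_eq_one {v : Fin 2 → ℤ} (hv : IsPrim v) : ∃ u, det2 v u = 1 := by
  obtain ⟨p, q, hpq⟩ := (isPrim_iff_isCoprime v).1 hv
  exact ⟨![-q, p], by simp [det2]; linear_combination hpq⟩

lemma isPrim_of_isUnit_det2 {v w : Fin 2 → ℤ} (h : IsUnit (det2 v w)) : IsPrim w := by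
  obtain ⟨e, he⟩ := h
  rw [isPrim_iff_isCoprime]
  exact ⟨↑e⁻¹ * -v 1, ↑e⁻¹ * v 0, by
    rw [det2] at he; linear_combination (↑e⁻¹ : ℤ) * he.symm + Units.inv_mul e⟩

end LatticeVectors

section Segments

variable {𝕜 : Type*} [CommRing 𝕜] [PartialOrder 𝕜] [AddRightMono 𝕜]

lemma det2_sub_eq_zero_of_mem_segment {p q x y z : Fin 2 → 𝕜} (hx : x ∈ segment 𝕜 p q)
    (hy : y ∈ segment 𝕜 p q) (hz : z ∈ segment 𝕜 p q) : det2 (y - x) (z - x) = 0 := by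
  rw [segment_eq_image'] at hx hy hz
  obtain ⟨α, -, rfl⟩ := hx
  obtain ⟨β, -, rfl⟩ := hy
  obtain ⟨γ, -, rfl⟩ := hz
  simp only [det2, Pi.sub_apply, Pi.add_apply, Pi.smul_apply, smul_eq_mul]
  ring

variable {E : Type*} [AddCommGroup E] [Module 𝕜 E]

lemma singleton_add_segment_zero (a b : E) : {a} + segment 𝕜 0 b = segment 𝕜 a (a + b) := by
  rw [Set.singleton_add, segment_translate_image, add_zero]

lemma smul_mem_segment_zero {θ : 𝕜} (h₀ : 0 ≤ θ) (h₁ : θ ≤ 1) (y : E) :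
    θ • y ∈ segment 𝕜 0 y :=
  ⟨1 - θ, θ, sub_nonneg.2 h₁, h₀, sub_add_cancel 1 θ, by simp⟩

end Segments

section Parallelogram

variable {v₁ v₂ : Fin 2 → ℤ}

lemma convex_parallelogram : Convex ℝ (parallelogram v₁ v₂) :=
  (convex_segment _ _).add (convex_segment _ _)

lemma zero_mem_parallelogram : (0 : Fin 2 → ℝ) ∈ parallelogram v₁ v₂ :=
  ⟨0, left_mem_segment ℝ _ _, 0, left_mem_segment ℝ _ _, add_zero 0⟩

lemma coeV_left_mem_parallelogram : coeV v₁ ∈ parallelogram v₁ v₂ :=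
  ⟨_, right_mem_segment ℝ _ _, 0, left_mem_segment ℝ _ _, add_zero _⟩

lemma coeV_right_mem_parallelogram : coeV v₂ ∈ parallelogram v₁ v₂ :=
  ⟨0, left_mem_segment ℝ _ _, _, right_mem_segment ℝ _ _, zero_add _⟩

lemma coeV_mem_parallelogram {x : Fin 2 → ℤ} {D s t : ℤ} (hD : 0 < D) (hs₀ : 0 ≤ s)
    (hs₁ : s ≤ D) (ht₀ : 0 ≤ t) (ht₁ : t ≤ D) (hx : D • x = s • v₁ + t • v₂) :
    coeV x ∈ parallelogram v₁ v₂ := by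
  have hDR : (0 : ℝ) < D := by exact_mod_cast hD
  have hxR : coeV x = (s / D : ℝ) • coeV v₁ + (t / D : ℝ) • coeV v₂ := by
    have h := congrArg coeV hx
    simp only [coeV_add, coeV_zsmul] at h
    rw [div_eq_inv_mul, div_eq_inv_mul, mul_smul, mul_smul, ← smul_add, ← h, smul_smul,
      inv_mul_cancel₀ hDR.ne', one_smul]
  rw [hxR]
  refine Set.add_mem_add
    (smul_mem_segment_zero (div_nonneg ?_ hDR.le) ((div_le_one hDR).2 ?_) _)
    (smul_mem_segment_zero (div_nonneg ?_ hDR.le) ((div_le_one hDR).2 ?_) _) <;>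
  exact_mod_cast ‹_›

lemma lattice_segment_ne_parallelogram (hdet : det2 v₁ v₂ ≠ 0) (A w : Fin 2 → ℤ) :
    {coeV A} + segment ℝ 0 (coeV (2 • w)) ≠ parallelogram v₁ v₂ := by
  intro h
  have mem : ∀ x ∈ parallelogram v₁ v₂, x ∈ segment ℝ (coeV A) (coeV A + coeV (2 • w)) := by
    intro x hx; rwa [← h, singleton_add_segment_zero] at hx
  have hcollinear := det2_sub_eq_zero_of_mem_segment (mem _ zero_mem_parallelogram)
    (mem _ coeV_left_mem_parallelogram) (mem _ coeV_right_mem_parallelogram)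
  rw [sub_zero, sub_zero, det2_coeV] at hcollinear
  exact hdet (by exact_mod_cast hcollinear)

lemma exists_lattice_segment_subset_parallelogram {v u : Fin 2 → ℤ} (hvu : IsUnit (det2 v u))
    (a : ℤ) {D : ℤ} (hD : 2 ≤ D) : ∃ A w : Fin 2 → ℤ, IsPrim w ∧
      {coeV A} + segment ℝ 0 (coeV (2 • w)) ⊆ parallelogram v (a • v + D • u) := by
  set N := 2 * a / D + 1
  have hND₀ : 2 * a < N * D := Int.lt_ediv_add_one_mul_self _ (by omega)
  have hND₁ : N * D ≤ 2 * a + D := by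
    have := Int.ediv_mul_le (2 * a) (b := D) (by omega); linarith
  have hN : N % 2 + 2 * (N / 2) = N := Int.emod_add_mul_ediv N 2
  refine ⟨(N % 2) • v, (N / 2) • v + u, isPrim_of_isUnit_det2 (v := v) ?_, ?_⟩
  · convert hvu using 1
    simp only [det2, Pi.add_apply, Pi.smul_apply, smul_eq_mul]; ring
  rw [singleton_add_segment_zero, ← coeV_add]
  refine convex_parallelogram.segment_subset
    (coeV_mem_parallelogram (D := D) (s := D * (N % 2)) (t := 0)
      (by omega) ?_ ?_ le_rfl (by omega) ?_)
    (coeV_mem_parallelogram (D := D) (s := N * D - 2 * a) (t := 2)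
      (by omega) (by omega) (by omega) zero_le_two hD ?_)
  · exact mul_nonneg (by omega) (Int.emod_nonneg N two_ne_zero)
  · nlinarith [Int.emod_lt_of_pos N two_pos]
  · funext i; simp only [Pi.smul_apply, Pi.add_apply, smul_eq_mul]; ring
  · funext i; simp only [Pi.smul_apply, Pi.add_apply, smul_eq_mul, two_nsmul]
    linear_combination (D * v i) * hN

end Parallelogram

theorem stmt3_general (v₁ v₂ : Fin 2 → ℤ) (h1 : IsPrim v₁)
    (hdet : 2 ≤ |v₁ 0 * v₂ 1 - v₁ 1 * v₂ 0|) :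
    ∃ (A w : Fin 2 → ℤ), IsPrim w ∧
      ({coeV A} : Set (Fin 2 → ℝ)) + segment ℝ 0 (coeV (2 • w)) ⊆
        segment ℝ 0 (coeV v₁) + segment ℝ 0 (coeV v₂) ∧
      ({coeV A} : Set (Fin 2 → ℝ)) + segment ℝ 0 (coeV (2 • w)) ≠
        segment ℝ 0 (coeV v₁) + segment ℝ 0 (coeV v₂) := by
  change 2 ≤ |det2 v₁ v₂| at hdet
  set D := det2 v₁ v₂
  have hD : D ≠ 0 := abs_pos.mp (by omega)
  obtain ⟨u, hu⟩ := h1.exists_det2_eq_one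
  have hv₂ : v₂ = det2 v₂ u • v₁ + |D| • (D.sign • u) := by
    rw [smul_smul, mul_comm, Int.sign_mul_abs]
    exact eq_det2_smul_add_det2_smul hu v₂
  have hunit : IsUnit (det2 v₁ (D.sign • u)) := by
    rw [det2_smul_right, hu, mul_one, Int.isUnit_iff_natAbs_eq]
    exact Int.natAbs_sign_of_ne_zero hD
  obtain ⟨A, w, hw, hsub⟩ :=
    exists_lattice_segment_subset_parallelogram hunit (det2 v₂ u) hdet
  exact ⟨A, w, hw, hv₂ ▸ hsub, lattice_segment_ne_parallelogram hD A w⟩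

/-- If `v₁, v₂` are primitive vectors in `ℤ²` spanning a parallelogram of area at least 2,
then the parallelogram `Π = [0,v₁] + [0,v₂]` strictly contains a lattice segment of lattice
length 2. -/
theorem stmt3 (v₁ v₂ : Fin 2 → ℤ) (h1 : IsPrim v₁) (h2 : IsPrim v₂)
    (hdet : 2 ≤ |v₁ 0 * v₂ 1 - v₁ 1 * v₂ 0|) :
    ∃ (A w : Fin 2 → ℤ), IsPrim w ∧
      ({coeV A} : Set (Fin 2 → ℝ)) + segment ℝ 0 (coeV (2 • w)) ⊆
        segment ℝ 0 (coeV v₁) + segment ℝ 0 (coeV v₂) ∧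
      ({coeV A} : Set (Fin 2 → ℝ)) + segment ℝ 0 (coeV (2 • w)) ≠
        segment ℝ 0 (coeV v₁) + segment ℝ 0 (coeV v₂) :=
  stmt3_general v₁ v₂ h1 hdet
end

section
/- Let v₃ = (s,t,u) ∈ ℤ³ with 0 ≤ s ≤ t < u, u ≥ 3, and s ≥ 1. Then the parallelepiped Π = [0,e₁] + [0,e₂] + [0, v₃] strictly contains a zonotope that is a Minkowski sum of three nontrivial lattice segments, one of which has lattice length 2; concretely, one of the following holds: (a) if s ≤ u/2 and t ≤ u/2 then (1,1,0) + 2[0,(0,0,1)] + [0,(s−1,t−1,u−2)] ⊆ Π; (b) if s > u/2 and t > u/2 then 2[0,(1,1,1)] + [0,(s−1,t−1,u−2)] ⊆ Π; (c) if s ≤ u/2 and t > u/2 then (1,0,0) + 2[0,(0,1,1)] + [0,(s−1,t−1,u−2)] ⊆ Π. -/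
/-!
`Π` is convex, and each candidate zonotope is a parallelogram `{p} + [0,a] + [0,b]`, i.e. the
convex hull of its four vertices `p, p + a, p + b, p + a + b`. Containment therefore reduces to
checking four lattice points against the slab description of `Π`, which is where the conditions
comparing `2s`, `2t` with `u` come from. For strictness, a point of `Π` (the origin in cases (a)
and (c), `e₁` in case (b)) violates a linear inequality satisfied by all four vertices.
-/

open Pointwise

/-- The parallelepiped `Π = [0,e₁] + [0,e₂] + [0,(s,t,u)]`. -/
def Pi3 (s t u : ℤ) : Set (Fin 3 → ℝ) :=
  segment ℝ 0 (coeV ![1, 0, 0]) + segment ℝ 0 (coeV ![0, 1, 0]) + segment ℝ 0 (coeV ![s, t, u])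

/-- `(1,1,0) + 2[0,(0,0,1)] + [0,(s-1,t-1,u-2)]`. -/
def Za (s t u : ℤ) : Set (Fin 3 → ℝ) :=
  ({coeV ![1, 1, 0]} : Set (Fin 3 → ℝ)) + segment ℝ 0 (coeV ![0, 0, 2]) +
    segment ℝ 0 (coeV ![s - 1, t - 1, u - 2])

/-- `2[0,(1,1,1)] + [0,(s-1,t-1,u-2)]`. -/
def Zb (s t u : ℤ) : Set (Fin 3 → ℝ) :=
  segment ℝ 0 (coeV ![2, 2, 2]) + segment ℝ 0 (coeV ![s - 1, t - 1, u - 2])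

/-- `(1,0,0) + 2[0,(0,1,1)] + [0,(s-1,t-1,u-2)]`. -/
def Zc (s t u : ℤ) : Set (Fin 3 → ℝ) :=
  ({coeV ![1, 0, 0]} : Set (Fin 3 → ℝ)) + segment ℝ 0 (coeV ![0, 2, 2]) +
    segment ℝ 0 (coeV ![s - 1, t - 1, u - 2])

section Parallelogram

variable {E : Type*} [AddCommGroup E] [Module ℝ E]

theorem singleton_add_segment_add_segment_eq_convexHull (p a b : E) :
    ({p} : Set E) + segment ℝ 0 a + segment ℝ 0 b =
      convexHull ℝ ({p, p + a, p + b, p + a + b} : Set E) := by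
  rw [← convexHull_singleton (𝕜 := ℝ) p, ← convexHull_pair, ← convexHull_pair, ← convexHull_add,
    ← convexHull_add]
  congr 1
  ext x
  simp only [Set.mem_add, Set.mem_insert_iff, Set.mem_singleton_iff, or_and_right, exists_or,
    exists_eq_left, add_zero]
  grind

theorem Convex.singleton_add_segment_add_segment_subset {S : Set E} (hS : Convex ℝ S) {p a b : E}
    (h : p ∈ S) (ha : p + a ∈ S) (hb : p + b ∈ S) (hab : p + a + b ∈ S) :
    ({p} : Set E) + segment ℝ 0 a + segment ℝ 0 b ⊆ S := by
  rw [singleton_add_segment_add_segment_eq_convexHull, hS.convexHull_subset_iff]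
  simp [Set.insert_subset_iff, *]

end Parallelogram

theorem convex_Pi3 (s t u : ℤ) : Convex ℝ (Pi3 s t u) :=
  ((convex_segment _ _).add (convex_segment _ _)).add (convex_segment _ _)

theorem mem_Pi3_of_le {s t u : ℤ} (hu : (0 : ℝ) < u) {x : Fin 3 → ℝ} (h2 : 0 ≤ x 2 ∧ x 2 ≤ u)
    (h0 : s * x 2 ≤ u * x 0 ∧ u * x 0 ≤ s * x 2 + u)
    (h1 : t * x 2 ≤ u * x 1 ∧ u * x 1 ≤ t * x 2 + u) : x ∈ Pi3 s t u := by
  have smul_mem {v : Fin 3 → ℝ} {θ : ℝ} (hθ : 0 ≤ θ ∧ θ ≤ 1) : θ • v ∈ segment ℝ 0 v :=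
    (convex_segment 0 v).smul_mem_of_zero_mem (left_mem_segment ℝ 0 v) (right_mem_segment ℝ 0 v) hθ
  set c := x 2 / u
  have hx : x = (x 0 - c * s) • coeV ![1, 0, 0] + (x 1 - c * t) • coeV ![0, 1, 0] +
      c • coeV ![s, t, u] := by
    ext i
    fin_cases i <;> simp [coeV, c, hu.ne']
  rw [hx]
  refine Set.add_mem_add (Set.add_mem_add (smul_mem ⟨?_, ?_⟩) (smul_mem ⟨?_, ?_⟩))
    (smul_mem ⟨?_, ?_⟩)
  all_goals
    rw [← mul_le_mul_iff_of_pos_left hu]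
    simp only [c]
    field_simp
    linarith

theorem Za_subset_Pi3 {s t u : ℤ} (hs₀ : 0 ≤ s) (ht₀ : 0 ≤ t) (hs : 2 * s ≤ u) (ht : 2 * t ≤ u)
    (hu : 2 ≤ u) : Za s t u ⊆ Pi3 s t u := by
  rify at hs₀ ht₀ hs ht hu
  refine (convex_Pi3 s t u).singleton_add_segment_add_segment_subset ?_ ?_ ?_ ?_ <;>
    refine mem_Pi3_of_le (by linarith) ⟨?_, ?_⟩ ⟨?_, ?_⟩ ⟨?_, ?_⟩ <;>
    simp only [coeV, Pi.add_apply, Matrix.cons_val, Matrix.cons_val_zero, Matrix.cons_val_one,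
      Int.cast_zero, Int.cast_one, Int.cast_ofNat, Int.cast_sub] <;>
    linarith

theorem Zb_eq_singleton_zero_add (s t u : ℤ) :
    Zb s t u = {0} + segment ℝ 0 (coeV ![2, 2, 2]) +
      segment ℝ 0 (coeV ![s - 1, t - 1, u - 2]) := by
  simp [Zb]

theorem Zb_subset_Pi3 {s t u : ℤ} (hs : u < 2 * s) (ht : u < 2 * t) (hsu : s ≤ u) (htu : t ≤ u)
    (hu : 2 ≤ u) : Zb s t u ⊆ Pi3 s t u := by
  rify at hs ht hsu htu hu
  rw [Zb_eq_singleton_zero_add]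
  refine (convex_Pi3 s t u).singleton_add_segment_add_segment_subset ?_ ?_ ?_ ?_ <;>
    refine mem_Pi3_of_le (by linarith) ⟨?_, ?_⟩ ⟨?_, ?_⟩ ⟨?_, ?_⟩ <;>
    simp only [coeV, Pi.add_apply, Pi.zero_apply, Matrix.cons_val, Matrix.cons_val_zero,
      Matrix.cons_val_one, Int.cast_one, Int.cast_ofNat, Int.cast_sub] <;>
    linarith

theorem Zc_subset_Pi3 {s t u : ℤ} (hs₀ : 0 ≤ s) (hs : 2 * s ≤ u) (ht : u < 2 * t) (htu : t ≤ u)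
    (hu : 2 ≤ u) : Zc s t u ⊆ Pi3 s t u := by
  rify at hs₀ hs ht htu hu
  refine (convex_Pi3 s t u).singleton_add_segment_add_segment_subset ?_ ?_ ?_ ?_ <;>
    refine mem_Pi3_of_le (by linarith) ⟨?_, ?_⟩ ⟨?_, ?_⟩ ⟨?_, ?_⟩ <;>
    simp only [coeV, Pi.add_apply, Matrix.cons_val, Matrix.cons_val_zero, Matrix.cons_val_one,
      Int.cast_zero, Int.cast_one, Int.cast_ofNat, Int.cast_sub] <;>
    linarith

theorem zero_mem_Pi3 (s t u : ℤ) : (0 : Fin 3 → ℝ) ∈ Pi3 s t u := by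
  have h : (0 + 0 + 0 : Fin 3 → ℝ) ∈ Pi3 s t u :=
    Set.add_mem_add (Set.add_mem_add (left_mem_segment ℝ _ _) (left_mem_segment ℝ _ _))
      (left_mem_segment ℝ _ _)
  simpa using h

theorem coeV_one_zero_zero_mem_Pi3 (s t u : ℤ) : coeV ![1, 0, 0] ∈ Pi3 s t u := by
  have h : coeV ![1, 0, 0] + 0 + 0 ∈ Pi3 s t u :=
    Set.add_mem_add (Set.add_mem_add (right_mem_segment ℝ _ _) (left_mem_segment ℝ _ _))
      (left_mem_segment ℝ _ _)
  simpa using h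

theorem Za_subset_one_le_apply_zero {s t u : ℤ} (hs : 1 ≤ s) : Za s t u ⊆ {x | 1 ≤ x 0} := by
  rify at hs
  exact (convex_halfSpace_ge (LinearMap.proj 0).isLinear 1).singleton_add_segment_add_segment_subset
    (by simp [coeV]) (by simp [coeV]) (by simp [coeV, hs]) (by simp [coeV, hs])

theorem Zc_subset_one_le_apply_zero {s t u : ℤ} (hs : 1 ≤ s) : Zc s t u ⊆ {x | 1 ≤ x 0} := by
  rify at hs
  exact (convex_halfSpace_ge (LinearMap.proj 0).isLinear 1).singleton_add_segment_add_segment_subset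
    (by simp [coeV]) (by simp [coeV]) (by simp [coeV, hs]) (by simp [coeV, hs])

theorem Zb_subset_apply_zero_sub_apply_two_nonpos {s t u : ℤ} (hsu : s < u) :
    Zb s t u ⊆ {x | x 0 - x 2 ≤ 0} := by
  have hsu' : (s : ℝ) + 1 ≤ u := by exact_mod_cast hsu
  rw [Zb_eq_singleton_zero_add]
  have hH : Convex ℝ {x : Fin 3 → ℝ | x 0 - x 2 ≤ 0} :=
    convex_halfSpace_le
      (LinearMap.proj (R := ℝ) (φ := fun _ : Fin 3 => ℝ) 0 - LinearMap.proj 2).isLinear 0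
  refine hH.singleton_add_segment_add_segment_subset ?_ ?_ ?_ ?_ <;> simp [coeV] <;> linarith

theorem Za_ne_Pi3 {s t u : ℤ} (hs : 1 ≤ s) : Za s t u ≠ Pi3 s t u := fun h => by
  have h0 : (1 : ℝ) ≤ (0 : Fin 3 → ℝ) 0 :=
    Za_subset_one_le_apply_zero hs (h ▸ zero_mem_Pi3 s t u)
  norm_num at h0

theorem Zb_ne_Pi3 {s t u : ℤ} (hsu : s < u) : Zb s t u ≠ Pi3 s t u := fun h => by
  have h0 : coeV ![1, 0, 0] 0 - coeV ![1, 0, 0] 2 ≤ 0 :=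
    Zb_subset_apply_zero_sub_apply_two_nonpos hsu (h ▸ coeV_one_zero_zero_mem_Pi3 s t u)
  simp only [coeV, Matrix.cons_val, Matrix.cons_val_zero, Int.cast_one, Int.cast_zero] at h0
  norm_num at h0

theorem Zc_ne_Pi3 {s t u : ℤ} (hs : 1 ≤ s) : Zc s t u ≠ Pi3 s t u := fun h => by
  have h0 : (1 : ℝ) ≤ (0 : Fin 3 → ℝ) 0 :=
    Zc_subset_one_le_apply_zero hs (h ▸ zero_mem_Pi3 s t u)
  norm_num at h0

/-- For `v₃ = (s,t,u)` with `1 ≤ s ≤ t < u` and `u ≥ 3`, the parallelepiped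
`Π = [0,e₁] + [0,e₂] + [0,v₃]` strictly contains a zonotope which is a Minkowski sum of
three nontrivial lattice segments, one of lattice length 2, as given by the three cases. -/
theorem stmt7 (s t u : ℤ) (hs : 1 ≤ s) (hst : s ≤ t) (htu : t < u) (hu : 3 ≤ u) :
    (2 * s ≤ u ∧ 2 * t ≤ u → Za s t u ⊆ Pi3 s t u ∧ Za s t u ≠ Pi3 s t u) ∧
    (u < 2 * s ∧ u < 2 * t → Zb s t u ⊆ Pi3 s t u ∧ Zb s t u ≠ Pi3 s t u) ∧
    (2 * s ≤ u ∧ u < 2 * t → Zc s t u ⊆ Pi3 s t u ∧ Zc s t u ≠ Pi3 s t u) := by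
  have hu₂ : 2 ≤ u := by omega
  refine ⟨fun ⟨hs', ht'⟩ => ⟨?_, Za_ne_Pi3 hs⟩, fun ⟨hs', ht'⟩ => ⟨?_, Zb_ne_Pi3 (by omega)⟩,
    fun ⟨hs', ht'⟩ => ⟨?_, Zc_ne_Pi3 hs⟩⟩
  · exact Za_subset_Pi3 (by omega) (by omega) hs' ht' hu₂
  · exact Zb_subset_Pi3 hs' ht' (by omega) htu.le hu₂
  · exact Zc_subset_Pi3 (by omega) hs' ht' htu.le hu₂
end

section
/- Let P ⊂ ℝ³ be a 3-dimensional lattice polytope with vertices A, B, C, D, E where ABCD is a tetrahedron and E is a lattice point in the interior of ABCD, and let G be the centroid of ABCD. Then E lies in at least one of the four tetrahedra obtained by cutting ABCD with a plane through G parallel to one of its facets, and consequently there is a vertex V of ABCD and a point F on the opposite facet with E on segment VF and VE/VF ≤ 3/4; hence the segment 3·VF (inside 3P) has lattice length at least 4 (since VE is a nontrivial lattice segment), so L(3P) ≥ 4. -/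
/-!
In barycentric coordinates with respect to `ABCD`, the interior point `E` has positive
coordinates summing to `1`, so the coordinate `a` of some vertex `V` is at least `1/4`. That is
exactly the condition for `E` to lie in the image of `ABCD` under the homothety of centre `V` and
ratio `3/4`, the corner tetrahedron cut off by the plane through the centroid parallel to the
facet opposite `V`. Pushing `E` away from `V` until its `V`-coordinate vanishes gives the point
`F` of that facet, and `VE = (1 - a) VF`.

For the Minkowski length, `y = V + (4/3)(E - V)` lies in `ABCD`, and `E - V = γ p` with `p`
primitive and `γ ≥ 1`. Hence `[V, V + (4/3) p] ⊆ ABCD`, and its triple `[3V, 3V + 4p]`, the sum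
of four copies of `[0, p]` translated by `3V`, lies in `3 ABCD ⊆ ABCD + ABCD + ABCD`.
-/

open Pointwise

/-- The zonotope with base lattice point `A` obtained as the Minkowski sum of the
lattice segments `[0, v i]`. -/
def Zono {n L : ℕ} (A : Fin n → ℤ) (v : Fin L → Fin n → ℤ) : Set (Fin n → ℝ) :=
  ({coeV A} : Set (Fin n → ℝ)) + ∑ i, segment ℝ 0 (coeV (v i))

/-- `P` contains (a translate of) a Minkowski sum of `L` primitive lattice segments. -/
def IsDecomp {n : ℕ} (P : Set (Fin n → ℝ)) (L : ℕ) : Prop :=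
  ∃ (A : Fin n → ℤ) (v : Fin L → Fin n → ℤ), (∀ i, IsPrim (v i)) ∧ Zono A v ⊆ P

/-- `L` is the Minkowski length of `P`. -/
def MinkLen {n : ℕ} (P : Set (Fin n → ℝ)) (L : ℕ) : Prop :=
  IsDecomp P L ∧ ∀ M, IsDecomp P M → M ≤ L

/-- `P` is a lattice polytope: the convex hull of a nonempty finite set of lattice points. -/
def IsLatticePolytope {n : ℕ} (P : Set (Fin n → ℝ)) : Prop :=
  ∃ S : Finset (Fin n → ℤ), S.Nonempty ∧ P = convexHull ℝ (coeV '' ↑S)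

/-- `Zono A v` is a smallest maximal Minkowski decomposition in `P`: it realizes the
Minkowski length of `P` and is minimal with respect to inclusion among all maximal
decompositions in `P`. -/
def IsSmallestMax {n L : ℕ} (P : Set (Fin n → ℝ)) (A : Fin n → ℤ)
    (v : Fin L → Fin n → ℤ) : Prop :=
  (∀ i, IsPrim (v i)) ∧ Zono A v ⊆ P ∧ MinkLen P L ∧
    ∀ (B : Fin n → ℤ) (w : Fin L → Fin n → ℤ), (∀ i, IsPrim (w i)) →
      Zono B w ⊆ P → Zono B w ⊆ Zono A v → Zono B w = Zono A v

/-- The tetrahedron with lattice vertices `A, B, C, D`. -/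
def tet (A B C D : Fin 3 → ℤ) : Set (Fin 3 → ℝ) :=
  convexHull ℝ {coeV A, coeV B, coeV C, coeV D}

open Set AffineMap

theorem Convex.add_smul_mem_of_mem_Icc {𝕜 E : Type*} [Field 𝕜] [LinearOrder 𝕜]
    [IsStrictOrderedRing 𝕜] [AddCommGroup E] [Module 𝕜 E] {s : Set E} (hs : Convex 𝕜 s)
    {x y : E} {c t : 𝕜} (hx : x ∈ s) (hy : x + c • y ∈ s) (ht : t ∈ Icc 0 c) :
    x + t • y ∈ s := by
  rcases ht.1.eq_or_lt with rfl | ht0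
  · rwa [zero_smul, add_zero]
  have hc : c ≠ 0 := (ht0.trans_le ht.2).ne'
  have h := hs.add_smul_mem hx hy ⟨div_nonneg ht.1 (ht0.le.trans ht.2), div_le_one_of_le₀ ht.2
    (ht0.le.trans ht.2)⟩
  rwa [smul_smul, div_mul_cancel₀ _ hc] at h

theorem sum_segment_zero_subset {ι 𝕜 E : Type*} [Fintype ι] [Field 𝕜] [LinearOrder 𝕜]
    [IsStrictOrderedRing 𝕜] [AddCommGroup E] [Module 𝕜 E] (v : E) :
    ∑ _i : ι, segment 𝕜 0 v ⊆ (· • v) '' Icc 0 (Fintype.card ι : 𝕜) := by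
  intro z hz
  obtain ⟨w, hw, rfl⟩ := (mem_fintype_sum _ z).1 hz
  have hs : ∀ i, ∃ s ∈ Icc (0 : 𝕜) 1, s • v = w i := by
    intro i
    obtain ⟨a, s, ha0, hs0, has, hsw⟩ := hw i
    exact ⟨s, ⟨hs0, by linarith⟩, by simpa using hsw⟩
  choose s hs hsw using hs
  refine ⟨∑ i, s i, ⟨Finset.sum_nonneg fun i _ => (hs i).1, ?_⟩, by
    simp only [Finset.sum_smul, hsw]⟩
  simpa using Finset.sum_le_sum fun i (_ : i ∈ Finset.univ) => (hs i).2

theorem smul_card_subset_sum_const {ι 𝕜 E : Type*} [Fintype ι] [Semiring 𝕜] [AddCommGroup E]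
    [Module 𝕜 E] (S : Set E) : (Fintype.card ι : 𝕜) • S ⊆ ∑ _i : ι, S := by
  rintro _ ⟨y, hy, rfl⟩
  exact (mem_fintype_sum _ _).2 ⟨fun _ => y, fun _ => hy, by
    simp [Nat.cast_smul_eq_nsmul]⟩

section AffineBasis

variable {ι E : Type*} [AddCommGroup E] [Module ℝ E] (b : AffineBasis ι ℝ E)

theorem AffineBasis.coord_homothety_self (i : ι) (t : ℝ) (x : E) :
    b.coord i (homothety (b i) t x) = t * (b.coord i x - 1) + 1 := by
  rw [homothety_eq_lineMap, AffineMap.apply_lineMap, b.coord_apply_eq, lineMap_apply_ring']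

theorem AffineBasis.coord_homothety_of_ne {i j : ι} (h : j ≠ i) (t : ℝ) (x : E) :
    b.coord j (homothety (b i) t x) = t * b.coord j x := by
  rw [homothety_eq_lineMap, AffineMap.apply_lineMap, b.coord_apply_ne h, lineMap_apply_ring']
  ring

theorem AffineBasis.mem_homothety_convexHull {i : ι} {x : E} {r : ℝ} (hr : 0 < r)
    (hx : ∀ j, 0 ≤ b.coord j x) (hxi : 1 - r ≤ b.coord i x) :
    x ∈ homothety (b i) r '' convexHull ℝ (range b) := by
  refine ⟨homothety (b i) r⁻¹ x, ?_, by rw [← homothety_mul_apply, mul_inv_cancel₀ hr.ne',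
    homothety_one, AffineMap.id_apply]⟩
  rw [b.convexHull_eq_nonneg_coord]
  intro j
  rcases eq_or_ne j i with rfl | hji
  · rw [b.coord_homothety_self,
      show r⁻¹ * (b.coord j x - 1) + 1 = r⁻¹ * (b.coord j x - (1 - r)) by field_simp; ring]
    exact mul_nonneg (inv_nonneg.2 hr.le) (sub_nonneg.2 hxi)
  · rw [b.coord_homothety_of_ne hji]
    exact mul_nonneg (inv_nonneg.2 hr.le) (hx j)

variable [Fintype ι]

theorem AffineBasis.exists_inv_card_le_coord (x : E) :
    ∃ i, (Fintype.card ι : ℝ)⁻¹ ≤ b.coord i x := by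
  have hsum := b.sum_coord_apply_eq_one x
  obtain ⟨i, -, hi⟩ := Finset.exists_le_of_sum_le (s := Finset.univ)
    (f := fun _ => (Fintype.card ι : ℝ)⁻¹) (g := fun i => b.coord i x)
    (Finset.nonempty_of_sum_ne_zero (by rw [hsum]; exact one_ne_zero)) (by
      rw [hsum, Finset.sum_const, Finset.card_univ, nsmul_eq_mul]
      exact mul_inv_le_one)
  exact ⟨i, hi⟩

theorem AffineBasis.coord_lt_one_of_pos {x : E} (hx : ∀ j, 0 < b.coord j x) {i j : ι}
    (hji : j ≠ i) : b.coord i x < 1 := by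
  classical
  calc b.coord i x < ∑ k ∈ {i, j}, b.coord k x := by
        rw [Finset.sum_pair hji.symm]; linarith [hx j]
    _ ≤ ∑ k, b.coord k x := Finset.sum_le_univ_sum_of_nonneg fun k => (hx k).le
    _ = 1 := b.sum_coord_apply_eq_one x

theorem AffineBasis.mem_convexHull_diff_of_coord_eq_zero {i : ι} {x : E}
    (hx : ∀ j, 0 ≤ b.coord j x) (hxi : b.coord i x = 0) :
    x ∈ convexHull ℝ (range b \ {b i}) := by
  classical
  have hw : ∑ j ∈ Finset.univ.erase i, b.coord j x = 1 := by
    rw [Finset.sum_erase (f := fun j => b.coord j x) _ hxi, b.sum_coord_apply_eq_one]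
  have h := (convex_convexHull ℝ (range b \ {b i})).sum_mem (fun j _ => hx j) hw
    fun j hj => subset_convexHull ℝ _
      ⟨mem_range_self j, b.ind.injective.ne (Finset.ne_of_mem_erase hj)⟩
  rwa [Finset.sum_erase _ (by rw [hxi, zero_smul]), b.linear_combination_coord_eq_self] at h

end AffineBasis

theorem AffineBasis.exists_mem_convexHull_diff_mem_segment {ι E : Type*} [Fintype ι]
    [NormedAddCommGroup E] [NormedSpace ℝ E] (b : AffineBasis ι ℝ E) {i : ι} {x : E}
    (hx : ∀ j, 0 ≤ b.coord j x) (hxi : b.coord i x < 1) :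
    ∃ F ∈ convexHull ℝ (range b \ {b i}),
      x ∈ segment ℝ (b i) F ∧ dist (b i) x = (1 - b.coord i x) * dist (b i) F := by
  have ha : 0 < 1 - b.coord i x := by linarith
  set F := homothety (b i) (1 - b.coord i x)⁻¹ x
  have hxF : x = homothety (b i) (1 - b.coord i x) F := by
    rw [← homothety_mul_apply, mul_inv_cancel₀ ha.ne', homothety_one, AffineMap.id_apply]
  have hFi : b.coord i F = 0 := by
    rw [b.coord_homothety_self]
    field_simp
    ring
  refine ⟨F, b.mem_convexHull_diff_of_coord_eq_zero (fun j => ?_) hFi, ?_, ?_⟩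
  · rcases eq_or_ne j i with rfl | hji
    · exact hFi.ge
    · rw [b.coord_homothety_of_ne hji]
      exact mul_nonneg (inv_nonneg.2 ha.le) (hx j)
  · nth_rewrite 1 [hxF]
    rw [homothety_eq_lineMap]
    exact lineMap_mem_segment ℝ _ _ ⟨ha.le, by linarith [hx i]⟩
  · nth_rewrite 1 [hxF]
    rw [dist_center_homothety, Real.norm_of_nonneg ha.le]

section Lattice

variable {n : ℕ}

@[simp]
theorem coeV_sub (u v : Fin n → ℤ) : coeV (u - v) = coeV u - coeV v := by
  ext i; simp [coeV]

@[simp]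
theorem coeV_smul (c : ℤ) (v : Fin n → ℤ) : coeV (c • v) = (c : ℝ) • coeV v := by
  ext i; simp [coeV]

theorem exists_eq_smul_isPrim {u : Fin n → ℤ} (hu : u ≠ 0) :
    ∃ γ : ℤ, 1 ≤ γ ∧ ∃ p, IsPrim p ∧ u = γ • p := by
  obtain ⟨i, hi⟩ := Function.ne_iff.1 hu
  obtain ⟨p, hup, hp⟩ := Finset.extract_gcd u ⟨i, Finset.mem_univ i⟩
  have hγ0 : Finset.univ.gcd u ≠ 0 := fun h => hi (Finset.gcd_eq_zero_iff.1 h i (by simp))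
  have hγ : 0 ≤ Finset.univ.gcd u := by
    rw [← Finset.normalize_gcd, ← Int.abs_eq_normalize]; exact abs_nonneg _
  exact ⟨_, by omega, p, hp, funext fun j => hup j (Finset.mem_univ j)⟩

theorem isDecomp_sum_of_add_smul_mem {m k : ℕ} (hm : 0 < m) {P : Set (Fin n → ℝ)} (hP : Convex ℝ P)
    {V u : Fin n → ℤ} (hu : u ≠ 0) (hV : coeV V ∈ P)
    (hVu : coeV V + ((k : ℝ) / m) • coeV u ∈ P) : IsDecomp (∑ _i : Fin m, P) k := by
  obtain ⟨γ, hγ, p, hp, rfl⟩ := exists_eq_smul_isPrim hu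
  refine ⟨(m : ℤ) • V, fun _ => p, fun _ => hp, ?_⟩
  rintro _ ⟨_, rfl, w, hw, rfl⟩
  obtain ⟨s, ⟨hs0, hsk⟩, rfl⟩ := sum_segment_zero_subset _ hw
  have hy : coeV V + (s / m) • coeV p ∈ P := by
    refine hP.add_smul_mem_of_mem_Icc hV (c := k / m * γ) ?_ ⟨by positivity, ?_⟩
    · rwa [coeV_smul, smul_smul] at hVu
    · rw [Fintype.card_fin] at hsk
      calc s / m ≤ k / m := by gcongr
        _ ≤ k / m * γ := le_mul_of_one_le_right (by positivity) (by exact_mod_cast hγ)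
  have hmy := smul_card_subset_sum_const (𝕜 := ℝ) (ι := Fin m) P ⟨_, hy, rfl⟩
  convert hmy using 1
  simp only [coeV_smul, Fintype.card_fin, Int.cast_natCast, smul_add, smul_smul,
    mul_div_cancel₀ s (Nat.cast_ne_zero.2 hm.ne' : (m : ℝ) ≠ 0)]

theorem isDecomp_sum_of_mem_homothety {m k : ℕ} (hm : 0 < m) (hk : 0 < k)
    {P : Set (Fin n → ℝ)} (hP : Convex ℝ P) {V E : Fin n → ℤ} (hEV : E ≠ V) (hV : coeV V ∈ P)
    (hE : coeV E ∈ homothety (coeV V) ((m : ℝ) / k) '' P) : IsDecomp (∑ _i : Fin m, P) k := by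
  obtain ⟨y, hy, hyE⟩ := hE
  refine isDecomp_sum_of_add_smul_mem hm hP (sub_ne_zero.2 hEV) hV ?_
  convert hy using 1
  rw [coeV_sub, ← hyE, homothety_apply, vsub_eq_sub, vadd_eq_add, add_sub_cancel_right, smul_smul,
    div_mul_div_cancel₀ (by positivity), div_self (by positivity), one_smul, add_sub_cancel]

end Lattice

section Tetrahedron

variable {A B C D : Fin 3 → ℤ} (hind : AffineIndependent ℝ ![coeV A, coeV B, coeV C, coeV D])

def tetBasis : AffineBasis (Fin 4) ℝ (Fin 3 → ℝ) :=
  ⟨_, hind, by rw [hind.affineSpan_eq_top_iff_card_eq_finrank_add_one]; simp⟩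

@[simp]
theorem coe_tetBasis : ⇑(tetBasis hind) = ![coeV A, coeV B, coeV C, coeV D] := rfl

theorem range_tetBasis : range (tetBasis hind) = {coeV A, coeV B, coeV C, coeV D} := by
  ext
  simp only [coe_tetBasis, mem_range, Fin.exists_fin_succ, mem_insert_iff]
  simp
  tauto

theorem tet_eq_convexHull_range_tetBasis :
    tet A B C D = convexHull ℝ (range (tetBasis hind)) := by
  rw [range_tetBasis]; rfl

theorem exists_mem_coeV_eq_tetBasis (i : Fin 4) :
    ∃ V ∈ ({A, B, C, D} : Set (Fin 3 → ℤ)), coeV V = tetBasis hind i := by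
  fin_cases i <;> simp

end Tetrahedron

/-- If `E` is a lattice point interior to the lattice tetrahedron `ABCD`, then `E` lies in one
of the four corner tetrahedra cut off by planes through the centroid parallel to the facets
(each a homothety of `ABCD` with ratio `3/4` centered at a vertex); consequently there are a
vertex `V` and a point `F` on the opposite facet with `E ∈ [V,F]` and `VE ≤ (3/4)·VF`, and
hence `L(3P) ≥ 4` for `P = ABCD`. -/
theorem stmt17 (A B C D E : Fin 3 → ℤ)
    (hind : AffineIndependent ℝ ![coeV A, coeV B, coeV C, coeV D])
    (hE : coeV E ∈ interior (tet A B C D)) :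
    (∃ V ∈ ({A, B, C, D} : Set (Fin 3 → ℤ)),
      coeV E ∈ AffineMap.homothety (coeV V) (3 / 4 : ℝ) '' tet A B C D) ∧
    (∃ V ∈ ({A, B, C, D} : Set (Fin 3 → ℤ)), ∃ F : Fin 3 → ℝ,
      F ∈ convexHull ℝ (({coeV A, coeV B, coeV C, coeV D} : Set (Fin 3 → ℝ)) \ {coeV V}) ∧
      coeV E ∈ segment ℝ (coeV V) F ∧
      dist (coeV V) (coeV E) ≤ (3 / 4) * dist (coeV V) F) ∧
    IsDecomp (tet A B C D + tet A B C D + tet A B C D) 4 := by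
  set b := tetBasis hind
  have htet : tet A B C D = convexHull ℝ (range b) := tet_eq_convexHull_range_tetBasis hind
  have hpos : ∀ j, 0 < b.coord j (coeV E) := by rwa [htet, b.interior_convexHull] at hE
  obtain ⟨i, hi⟩ := b.exists_inv_card_le_coord (coeV E)
  rw [Fintype.card_fin, Nat.cast_ofNat] at hi
  have hlt := b.coord_lt_one_of_pos hpos (exists_ne i).choose_spec
  obtain ⟨V, hV, hVi⟩ := exists_mem_coeV_eq_tetBasis hind i
  have hVP : coeV V ∈ tet A B C D := by
    rw [htet, hVi]; exact subset_convexHull ℝ _ (mem_range_self i)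
  have hEV : E ≠ V := by
    rintro rfl
    rw [hVi, b.coord_apply_eq] at hlt
    exact hlt.false
  have hhom : coeV E ∈ homothety (coeV V) (3 / 4 : ℝ) '' tet A B C D := by
    rw [htet, hVi]
    exact b.mem_homothety_convexHull (by norm_num) (fun j => (hpos j).le) (by linarith)
  obtain ⟨F, hF, hEF, hdist⟩ :=
    b.exists_mem_convexHull_diff_mem_segment (fun j => (hpos j).le) hlt
  rw [range_tetBasis, ← hVi] at hF
  rw [← hVi] at hEF hdist
  refine ⟨⟨V, hV, hhom⟩, ⟨V, hV, F, hF, hEF, hdist.trans_le (by gcongr; linarith)⟩, ?_⟩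
  rw [← Fin.sum_univ_three fun _ => tet A B C D]
  exact isDecomp_sum_of_mem_homothety three_pos four_pos (convex_convexHull ℝ _) hEV hVP
    (by exact_mod_cast hhom)
end
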